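/- arXiv:2603.15398 — 2 statements merged into one kernel-verified Lean document; each statement's English description precedes it below -/
import Mathlib

section
/- Fix λ > 0, μ > 0, T > 0, b ∈ (0,1), q₀ ≥ 0 with q₀ < λ/μ, and let ξ = λ/μ. For τ ∈ [0,T], define D(τ) = (1-b)(q₀ - ξ)e^{-μτ} - (b-1)ξe^{-μ(T-τ)}. Then D(τ) = 0 has the unique solution τ* = T/2 + ln(1 - q₀μ/λ)/(2μ), D is negative on [0, τ*) and positive on (τ*, T], provided τ* ∈ (0,T). -/
theorem stmt_11 (lam mu T b q0 : ℝ) (hlam : 0 < lam) (hmu : 0 < mu) (hT : 0 < T)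
    (hb0 : 0 < b) (hb1 : b < 1) (hq0l : 0 ≤ q0) (hq0u : q0 < lam / mu)
    (ξ : ℝ) (hξ : ξ = lam / mu)
    (D : ℝ → ℝ)
    (hD : ∀ τ, D τ = (1 - b) * (q0 - ξ) * Real.exp (-mu * τ)
        - (b - 1) * ξ * Real.exp (-mu * (T - τ)))
    (τstar : ℝ) (hτ : τstar = T / 2 + Real.log (1 - q0 * mu / lam) / (2 * mu))
    (hin : 0 < τstar ∧ τstar < T) :
    D τstar = 0 ∧
    (∀ τ ∈ Set.Icc (0 : ℝ) T, D τ = 0 → τ = τstar) ∧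
    (∀ τ ∈ Set.Ico (0 : ℝ) τstar, D τ < 0) ∧
    (∀ τ ∈ Set.Ioc τstar T, 0 < D τ) := by
  have hξpos : 0 < ξ := by rw [hξ]; positivity
  have hml : q0 * mu < lam := (lt_div_iff₀ hmu).mp hq0u
  have hr : (0:ℝ) < 1 - q0 * mu / lam := by
    have : q0 * mu / lam < 1 := (div_lt_one hlam).mpr hml
    linarith
  have hstar : Real.exp (mu * (2 * τstar - T)) = 1 - q0 * mu / lam := by
    have : mu * (2 * τstar - T) = Real.log (1 - q0 * mu / lam) := by
      rw [hτ]; field_simp; ring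
    rw [this, Real.exp_log hr]
  have hξr : ξ * (1 - q0 * mu / lam) = ξ - q0 := by
    rw [hξ]; field_simp
  have key : ∀ τ, D τ = (1 - b) * ξ * Real.exp (-mu * τ) *
      (Real.exp (mu * (2 * τ - T)) - Real.exp (mu * (2 * τstar - T))) := by
    intro τ
    rw [hD, hstar, mul_sub]
    have e1 : Real.exp (-mu * τ) * Real.exp (mu * (2 * τ - T))
        = Real.exp (-mu * (T - τ)) := by
      rw [← Real.exp_add]; ring_nf
    linear_combination (-(1 - b) * ξ) * e1 + (1 - b) * Real.exp (-mu * τ) * hξr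
  have hsign : ∀ τ, (τ < τstar → D τ < 0) ∧ (τ = τstar → D τ = 0) ∧ (τstar < τ → 0 < D τ) := by
    intro τ
    have hc : 0 < (1 - b) * ξ * Real.exp (-mu * τ) :=
      mul_pos (mul_pos (by linarith) hξpos) (Real.exp_pos _)
    refine ⟨fun h => ?_, fun h => ?_, fun h => ?_⟩
    · rw [key]
      have : Real.exp (mu * (2 * τ - T)) < Real.exp (mu * (2 * τstar - T)) :=
        Real.exp_lt_exp.mpr (by nlinarith)
      nlinarith
    · rw [key, h]; ring
    · rw [key]
      have : Real.exp (mu * (2 * τstar - T)) < Real.exp (mu * (2 * τ - T)) :=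
        Real.exp_lt_exp.mpr (by nlinarith)
      nlinarith
  refine ⟨(hsign τstar).2.1 rfl, ?_, ?_, ?_⟩
  · intro τ _ h0
    rcases lt_trichotomy τ τstar with h | h | h
    · exact absurd h0 ((hsign τ).1 h).ne
    · exact h
    · exact absurd h0 (((hsign τ).2.2 h).ne')
  · intro τ hτ'; exact (hsign τ).1 hτ'.2
  · intro τ hτ'; exact (hsign τ).2.2 hτ'.1
end

section
/- Fix λ > 0, μ > 0, T > 0, b ∈ (0,1), q₀ ≥ λ/μ. The derivative D(τ) = (1-b)(q₀ - λ/μ)e^{-μτ} + (1-b)(λ/μ)e^{-μ(T-τ)} is strictly positive for all τ ∈ [0,T]; hence the total queue length with one impulse at time τ is strictly increasing in τ, so it is minimized at τ = 0 and maximized at τ = T. -/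
lemma aux_int (a c mu x y s : ℝ) (hmu : mu ≠ 0) :
    (∫ t in x..y, (a + c * Real.exp (-mu * (t - s))))
      = (a * y - c / mu * Real.exp (-mu * (y - s)))
        - (a * x - c / mu * Real.exp (-mu * (x - s))) := by
  apply intervalIntegral.integral_eq_sub_of_hasDerivAt
  · intro t ht
    have h1 : HasDerivAt (fun t : ℝ => a * t) a t := by
      simpa using (hasDerivAt_id t).const_mul a
    have h2 : HasDerivAt (fun t : ℝ => Real.exp (-mu * (t - s)))
        (Real.exp (-mu * (t - s)) * (-mu * 1)) t := by
      exact (((hasDerivAt_id t).sub_const s).const_mul (-mu)).exp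
    have := h1.sub (h2.const_mul (c / mu))
    refine this.congr_deriv ?_
    field_simp
    ring
  · apply Continuous.intervalIntegrable
    fun_prop

theorem stmt_12 (lam mu T b q0 : ℝ) (hlam : 0 < lam) (hmu : 0 < mu) (hT : 0 < T)
    (hb0 : 0 < b) (hb1 : b < 1) (hq0 : lam / mu ≤ q0)
    (D : ℝ → ℝ)
    (hD : ∀ τ, D τ = (1 - b) * (q0 - lam / mu) * Real.exp (-mu * τ)
        + (1 - b) * (lam / mu) * Real.exp (-mu * (T - τ)))
    (J : ℝ → ℝ)
    (hJ : ∀ τ, J τ =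
      (∫ t in (0 : ℝ)..τ, (lam / mu + (q0 - lam / mu) * Real.exp (-mu * t))) +
      (∫ t in τ..T, (lam / mu +
        (b * (lam / mu + (q0 - lam / mu) * Real.exp (-mu * τ)) - lam / mu)
          * Real.exp (-mu * (t - τ))))) :
    (∀ τ ∈ Set.Icc (0 : ℝ) T, 0 < D τ) ∧
    StrictMonoOn J (Set.Icc (0 : ℝ) T) ∧
    (∀ τ ∈ Set.Icc (0 : ℝ) T, J 0 ≤ J τ ∧ J τ ≤ J T) := by
  have hmu' : mu ≠ 0 := ne_of_gt hmu
  set a := lam / mu with ha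
  set c := q0 - a with hc
  have hc0 : 0 ≤ c := by simp [hc]; linarith
  have ha0 : 0 < a := div_pos hlam hmu
  -- closed form
  set g : ℝ → ℝ := fun τ =>
    a * T + c / mu * (1 - Real.exp (-mu * τ))
      + (b * (a + c * Real.exp (-mu * τ)) - a) / mu * (1 - Real.exp (-mu * (T - τ)))
    with hg
  have hJg : J = g := by
    funext τ
    rw [hJ τ]
    have e1 : (∫ t in (0:ℝ)..τ, (a + c * Real.exp (-mu * t)))
        = (a * τ - c / mu * Real.exp (-mu * (τ - 0)))
          - (a * 0 - c / mu * Real.exp (-mu * ((0:ℝ) - 0))) := by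
      have := aux_int a c mu 0 τ 0 hmu'
      simpa using this
    have e2 := aux_int a (b * (a + c * Real.exp (-mu * τ)) - a) mu τ T τ hmu'
    rw [e1, e2]
    simp [hg]
    field_simp
    ring
  -- derivative of g
  have hderiv : ∀ τ : ℝ, HasDerivAt g (D τ) τ := by
    intro τ
    have hE1 : HasDerivAt (fun τ : ℝ => Real.exp (-mu * τ))
        (Real.exp (-mu * τ) * (-mu * 1)) τ := ((hasDerivAt_id τ).const_mul (-mu)).exp
    have hE2 : HasDerivAt (fun τ : ℝ => Real.exp (-mu * (T - τ)))
        (Real.exp (-mu * (T - τ)) * (-mu * (0 - 1))) τ := by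
      exact (((hasDerivAt_const τ T).sub (hasDerivAt_id τ)).const_mul (-mu)).exp
    have h1 : HasDerivAt (fun τ : ℝ => a * T + c / mu * (1 - Real.exp (-mu * τ)))
        (0 + c / mu * (0 - Real.exp (-mu * τ) * (-mu * 1))) τ :=
      (hasDerivAt_const τ (a * T)).add
        (((hasDerivAt_const τ (1:ℝ)).sub hE1).const_mul (c / mu))
    have hu : HasDerivAt (fun τ : ℝ => (b * (a + c * Real.exp (-mu * τ)) - a) / mu)
        ((b * (0 + c * (Real.exp (-mu * τ) * (-mu * 1))) - 0) / mu) τ := by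
      exact ((((hasDerivAt_const τ a).add (hE1.const_mul c)).const_mul b).sub
        (hasDerivAt_const τ a)).div_const mu
    have hv : HasDerivAt (fun τ : ℝ => 1 - Real.exp (-mu * (T - τ)))
        (0 - Real.exp (-mu * (T - τ)) * (-mu * (0 - 1))) τ :=
      (hasDerivAt_const τ (1:ℝ)).sub hE2
    have := h1.add (hu.mul hv)
    refine this.congr_deriv ?_
    rw [hD]
    field_simp
    ring
  -- positivity of D
  have hDpos : ∀ τ : ℝ, 0 < D τ := by
    intro τ
    rw [hD]
    have t1 : 0 ≤ (1 - b) * c * Real.exp (-mu * τ) := by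
      apply mul_nonneg (mul_nonneg (by linarith) hc0) (Real.exp_pos _).le
    have t2 : 0 < (1 - b) * a * Real.exp (-mu * (T - τ)) := by
      apply mul_pos (mul_pos (by linarith) ha0) (Real.exp_pos _)
    linarith
  have hmono : StrictMonoOn J (Set.Icc (0 : ℝ) T) := by
    rw [hJg]
    apply strictMonoOn_of_deriv_pos (convex_Icc 0 T)
    · exact fun x _ => ((hderiv x).continuousAt).continuousWithinAt
    · intro x hx
      rw [(hderiv x).deriv]
      exact hDpos x
  refine ⟨fun τ _ => hDpos τ, hmono, fun τ hτ => ⟨?_, ?_⟩⟩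
  · rcases eq_or_lt_of_le hτ.1 with h | h
    · rw [h]
    · exact (hmono (Set.left_mem_Icc.2 hT.le) hτ h).le
  · rcases eq_or_lt_of_le hτ.2 with h | h
    · rw [h]
    · exact (hmono hτ (Set.right_mem_Icc.2 hT.le) h).le
end
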